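/- Let I be a left-hereditary sub-semigroup of 𝒵 and let Z ∈ 𝒵 satisfy Z ≤ ⋁_{Y ∈ I} Y (the pointwise join over all elements of I). Then for every ε > 0 there exist finitely many Y₁, …, Yₙ ∈ I such that Z(t) ⊆ (Y₁ ∨ ⋯ ∨ Yₙ)(t + ε) for all t ∈ [0,∞). -/

import Mathlib

open Set NNReal ENNReal

/-- A "partial order" on `M`: a reflexive and transitive (not necessarily
antisymmetric) relation, identified with a subset of `M × M`. -/
def IsPO {M : Type*} (V : Set (M × M)) : Prop :=
  (∀ j : M, (j, j) ∈ V) ∧ ∀ j k l : M, (j, k) ∈ V → (k, l) ∈ V → (j, l) ∈ V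

/-- The diagonal relation `D`. -/
def diagRel (M : Type*) : Set (M × M) := {p : M × M | p.1 = p.2}

/-- The smallest partial order containing `S` (reflexive-transitive closure). -/
def poGen {M : Type*} (S : Set (M × M)) : Set (M × M) :=
  ⋂₀ {V : Set (M × M) | IsPO V ∧ S ⊆ V}

/-- The join of two partial orders: the smallest partial order containing their union. -/
def poJoin {M : Type*} (V W : Set (M × M)) : Set (M × M) := poGen (V ∪ W)

/-- Membership in `𝒴`: maps `Y : [0,∞) → {partial orders on M}` with `Y 0 = D`,
increasing, and left-continuous. -/
def MemY {M : Type*} (Y : ℝ≥0 → Set (M × M)) : Prop :=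
  (∀ t : ℝ≥0, IsPO (Y t)) ∧ Y 0 = diagRel M ∧
    (∀ s t : ℝ≥0, s ≤ t → Y s ⊆ Y t) ∧
    ∀ t : ℝ≥0, 0 < t → Y t = ⋃ s ∈ Set.Iio t, Y s

/-- The pointwise join on `𝒴`. -/
def joinY {M : Type*} (Y Z : ℝ≥0 → Set (M × M)) : ℝ≥0 → Set (M × M) :=
  fun t => poJoin (Y t) (Z t)

/-- The support of a partial order `V`. -/
def suppV {M : Type*} (V : Set (M × M)) : Set M :=
  {j : M | ∃ k : M, k ≠ j ∧ ((j, k) ∈ V ∨ (k, j) ∈ V)}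

/-- The support of an order process `Y ∈ 𝒴`. -/
def suppY {M : Type*} (Y : ℝ≥0 → Set (M × M)) : Set M := ⋃ t : ℝ≥0, suppV (Y t)

/-- Membership in `𝒵`: elements of `𝒴` with finite support. -/
def MemZ {M : Type*} (Y : ℝ≥0 → Set (M × M)) : Prop := MemY Y ∧ (suppY Y).Finite

/-- The order on `𝒴`: `Y ≤ Z` iff `Y ∨ Z = Z`. -/
def leY {M : Type*} (Y Z : ℝ≥0 → Set (M × M)) : Prop := joinY Y Z = Z

/-- A sub-semigroup of `𝒵`. -/
def IsSubsemigroupZ {M : Type*} (I : Set (ℝ≥0 → Set (M × M))) : Prop :=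
  (∀ Y ∈ I, MemZ Y) ∧ ∀ Y ∈ I, ∀ Z ∈ I, joinY Y Z ∈ I

/-- Left-hereditary sub-semigroups. -/
def LeftHereditary {M : Type*} (I : Set (ℝ≥0 → Set (M × M))) : Prop :=
  ∀ Z₁ Z₂ : ℝ≥0 → Set (M × M), MemZ Z₁ → Z₂ ∈ I → leY Z₁ Z₂ → Z₁ ∈ I

/-- The pointwise join of a set of order processes. -/
def joinSetY {M : Type*} (I : Set (ℝ≥0 → Set (M × M))) : ℝ≥0 → Set (M × M) :=
  fun t => poGen (⋃ Y ∈ I, Y t)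

/-- The pointwise join of a family of order processes. -/
def joinFam {M : Type*} {ι : Type*} (Z : ι → ℝ≥0 → Set (M × M)) : ℝ≥0 → Set (M × M) :=
  fun t => poGen (⋃ i, Z i t)

/-!
A pair `p` occurs in `Z` only at times `t ≥ s = inf {t | p ∈ Z t}`, and it lies in the closure of
`⋃_{Y ∈ I} Y t₁` at some time `t₁ < s + ε`. Membership in a reflexive-transitive closure
is witnessed by a finite chain, hence by finitely many `Y ∈ I`, and as these `Y` are increasing
they witness `p ∈ Z t` at time `t + ε` for every `t`. Since `Z` has finite support, only finitely
many off-diagonal pairs occur, and together they need only finitely many `Y`.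
-/

section

variable {M : Type*}

lemma diag_mem_poGen (S : Set (M × M)) (j : M) : (j, j) ∈ poGen S :=
  fun _ hV => hV.1.1 j

lemma subset_poGen (S : Set (M × M)) : S ⊆ poGen S :=
  fun _ hp _ hV => hV.2 hp

lemma isPO_poGen (S : Set (M × M)) : IsPO (poGen S) :=
  ⟨diag_mem_poGen S, fun j k l hjk hkl V hV => hV.1.2 j k l (hjk V hV) (hkl V hV)⟩

lemma poGen_subset {S V : Set (M × M)} (hV : IsPO V) (hS : S ⊆ V) : poGen S ⊆ V :=
  fun _ hp => hp V ⟨hV, hS⟩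

lemma poGen_mono {S T : Set (M × M)} (h : S ⊆ T) : poGen S ⊆ poGen T :=
  poGen_subset (isPO_poGen T) (h.trans (subset_poGen T))

lemma exists_finite_subset_mem_poGen_biUnion {ι : Type*} {I : Set ι} {F : ι → Set (M × M)}
    {p : M × M} (hp : p ∈ poGen (⋃ i ∈ I, F i)) :
    ∃ G ⊆ I, G.Finite ∧ p ∈ poGen (⋃ i ∈ G, F i) := by
  let W : Set (M × M) := {q | ∃ G ⊆ I, G.Finite ∧ q ∈ poGen (⋃ i ∈ G, F i)}
  have hW : IsPO W := by
    refine ⟨fun j => ⟨∅, empty_subset I, finite_empty, diag_mem_poGen _ j⟩, ?_⟩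
    rintro j k l ⟨G, hGI, hG, hjk⟩ ⟨H, hHI, hH, hkl⟩
    refine ⟨G ∪ H, union_subset hGI hHI, hG.union hH, (isPO_poGen _).2 j k l ?_ ?_⟩
    · exact poGen_mono (biUnion_subset_biUnion_left subset_union_left) hjk
    · exact poGen_mono (biUnion_subset_biUnion_left subset_union_right) hkl
  refine poGen_subset hW ?_ hp
  simp only [iUnion_subset_iff]
  intro i hi q hq
  refine ⟨{i}, singleton_subset_iff.2 hi, finite_singleton i, subset_poGen _ ?_⟩
  simpa only [mem_singleton_iff, iUnion_iUnion_eq_left] using hq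

lemma leY.subset {Y Z : ℝ≥0 → Set (M × M)} (h : leY Y Z) (t : ℝ≥0) : Y t ⊆ Z t := by
  rw [← congrFun h t]
  exact subset_union_left.trans (subset_poGen _)

lemma MemY.monotone {Y : ℝ≥0 → Set (M × M)} (hY : MemY Y) : Monotone Y :=
  fun s t hst => hY.2.2.1 s t hst

lemma iUnion_diff_diagRel_subset_suppY_prod (Z : ℝ≥0 → Set (M × M)) :
    ⋃ t, Z t \ diagRel M ⊆ suppY Z ×ˢ suppY Z := by
  simp only [iUnion_subset_iff]
  rintro t ⟨j, k⟩ ⟨hjk, hne⟩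
  exact ⟨mem_iUnion.2 ⟨t, k, Ne.symm hne, Or.inl hjk⟩, mem_iUnion.2 ⟨t, j, hne, Or.inr hjk⟩⟩

lemma poGen_biUnion_subset_of_le {T : Type*} [Preorder T] {G : Set (T → Set (M × M))}
    (hG : ∀ Y ∈ G, Monotone Y) {s t : T} (hst : s ≤ t) :
    poGen (⋃ Y ∈ G, Y s) ⊆ poGen (⋃ Y ∈ G, Y t) :=
  poGen_mono (iUnion₂_mono fun Y hY => hG Y hY hst)

variable {I : Set (ℝ≥0 → Set (M × M))} {Z : ℝ≥0 → Set (M × M)} {ε : ℝ≥0}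

lemma exists_finite_subset_forall_mem_poGen_add (hI : ∀ Y ∈ I, Monotone Y)
    (hle : ∀ t, Z t ⊆ joinSetY I t) (hε : 0 < ε) (p : M × M) :
    ∃ G ⊆ I, G.Finite ∧ ∀ t, p ∈ Z t → p ∈ poGen (⋃ Y ∈ G, Y (t + ε)) := by
  by_cases hp : ∃ t, p ∈ Z t
  · let s := sInf {t | p ∈ Z t}
    obtain ⟨t₁, hpt₁, ht₁⟩ := exists_lt_of_csInf_lt hp (lt_add_of_pos_right s hε)
    obtain ⟨G, hGI, hG, hpG⟩ := exists_finite_subset_mem_poGen_biUnion (hle t₁ hpt₁)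
    refine ⟨G, hGI, hG, fun t hpt => poGen_biUnion_subset_of_le (fun Y hY => hI Y (hGI hY)) ?_ hpG⟩
    have hst : s ≤ t := csInf_le (OrderBot.bddBelow _) hpt
    exact ht₁.le.trans (add_le_add_left hst ε)
  · simp only [not_exists] at hp
    exact ⟨∅, empty_subset I, finite_empty, fun t hpt => absurd hpt (hp t)⟩

lemma exists_finite_subset_forall_subset_poGen_add (hI : ∀ Y ∈ I, Monotone Y)
    (hZ : (suppY Z).Finite) (hle : ∀ t, Z t ⊆ joinSetY I t) (hε : 0 < ε) :
    ∃ G ⊆ I, G.Finite ∧ ∀ t, Z t ⊆ poGen (⋃ Y ∈ G, Y (t + ε)) := by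
  let P := ⋃ t, Z t \ diagRel M
  have hP : P.Finite := (hZ.prod hZ).subset (iUnion_diff_diagRel_subset_suppY_prod Z)
  choose G hGI hG hpG using exists_finite_subset_forall_mem_poGen_add hI hle hε
  refine ⟨⋃ p ∈ P, G p, iUnion₂_subset fun p _ => hGI p, hP.biUnion fun p _ => hG p, ?_⟩
  rintro t ⟨j, k⟩ hjk
  by_cases hdiag : j = k
  · subst hdiag
    exact diag_mem_poGen _ j
  · have hjkP : (j, k) ∈ P := mem_iUnion.2 ⟨t, hjk, hdiag⟩
    refine poGen_mono ?_ (hpG (j, k) t hjk)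
    exact biUnion_subset_biUnion_left (subset_biUnion_of_mem (u := G) hjkP)

end

theorem finitely_many_suffice_general {M : Type*}
    (I : Set (ℝ≥0 → Set (M × M))) (hI : IsSubsemigroupZ I)
    (Z : ℝ≥0 → Set (M × M)) (hZ : MemZ Z) (hle : leY Z (joinSetY I)) :
    ∀ ε : ℝ≥0, 0 < ε → ∃ (n : ℕ) (Ys : Fin n → ℝ≥0 → Set (M × M)),
      (∀ i, Ys i ∈ I) ∧ ∀ t : ℝ≥0, Z t ⊆ joinFam Ys (t + ε) := by
  intro ε hε
  obtain ⟨G, hGI, hG, hZG⟩ := exists_finite_subset_forall_subset_poGen_add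
    (fun Y hY => (hI.1 Y hY).1.monotone) hZ.2 hle.subset hε
  obtain ⟨n, Ys, rfl⟩ := hG.fin_embedding
  refine ⟨n, Ys, fun i => hGI (mem_range_self i), fun t => ?_⟩
  simpa only [joinFam, biUnion_range] using hZG t

/-- If `I` is a left-hereditary sub-semigroup of `𝒵` and `Z ∈ 𝒵` with
`Z ≤ ⋁_{Y ∈ I} Y`, then for each `ε > 0`, `Z(t)` is dominated by the join of
finitely many elements of `I` taken at time `t + ε`, for all `t`. -/
theorem finitely_many_suffice {M : Type*} [Countable M] [Infinite M]
    (I : Set (ℝ≥0 → Set (M × M))) (hI : IsSubsemigroupZ I) (hIh : LeftHereditary I)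
    (Z : ℝ≥0 → Set (M × M)) (hZ : MemZ Z) (hle : leY Z (joinSetY I)) :
    ∀ ε : ℝ≥0, 0 < ε → ∃ (n : ℕ) (Ys : Fin n → ℝ≥0 → Set (M × M)),
      (∀ i, Ys i ∈ I) ∧ ∀ t : ℝ≥0, Z t ⊆ joinFam Ys (t + ε) :=
  finitely_many_suffice_general I hI Z hZ hle
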